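/- arXiv:1710.00029 — 5 statements merged into one kernel-verified Lean document; each statement's English description precedes it below -/
import Mathlib

section
/- Let q₀(σ) = 4·arctan(e^σ) and let a₁, a₂, φ, s be real numbers and I ∈ ℝ with I ≠ 0 and I ≠ 1. Then the Melnikov potential integral ∫_{−∞}^{+∞} (cos(q₀(σ)) − 1)·(a₁cos(φ + Iσ) + a₂cos(φ − s + (I−1)σ)) dσ converges and equals −(2πI a₁/sinh(πI/2))·cos φ − (2π(I−1)a₂/sinh(π(I−1)/2))·cos(φ − s). In particular, the Melnikov potential has the two-harmonic form A₁(I)cos φ + A₂(I)cos(φ−s), with coefficients A₁(I) = 2πI a₁/sinh(πI/2) and A₂(I) = 2π(I−1)a₂/sinh(π(I−1)/2) up to a global sign. -/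
/-!
Along the separatrix, `cos q₀(σ) - 1 = -2 sech² σ`, because `sin (2 arctan eˣ) = sech x`. So the
potential is a combination of the Fourier transforms `∫ sech² x · cos (c + b x) dx`. The
substitution `u = sigmoid (2x)`, for which `du = (sech² x / 2) dx` and `u / (1 - u) = e^{2x}`,
turns `∫ sech² x · e^{2zx} dx` into `2 B(1 + z, 1 - z) = 2Γ(1 + z)Γ(1 - z) = 2πz / sin (πz)` by
the reflection formula; at `z = ib/2` this is `πb / sinh (πb/2)`.
-/

open Real MeasureTheory Set
open scoped Complex

theorem Complex.betaIntegral_one_add_one_sub {z : ℂ} (hz : z ≠ 0) (h₀ : -1 < z.re)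
    (h₁ : z.re < 1) : betaIntegral (1 + z) (1 - z) = π * z / sin (π * z) := by
  have hbeta := Gamma_mul_Gamma_eq_betaIntegral (s := 1 + z) (t := 1 - z)
    (by simp; linarith) (by simp; linarith)
  have hGamma_two : Gamma (1 + z + (1 - z)) = 1 := by
    rw [show 1 + z + (1 - z) = 1 + 1 by ring, Gamma_add_one 1 one_ne_zero, Gamma_one, mul_one]
  have hGamma_one_add : Gamma (1 + z) = z * Gamma z := by
    rw [add_comm]; exact Gamma_add_one z hz
  rw [hGamma_two, one_mul, hGamma_one_add, mul_assoc, Gamma_mul_Gamma_one_sub] at hbeta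
  rw [← hbeta]
  ring

theorem Complex.betaIntegral_one_add_one_sub_eq_integral_sigmoid (z : ℂ) :
    betaIntegral (1 + z) (1 - z) = ∫ t : ℝ, cexp (z * t) * (sigmoid t * (1 - sigmoid t) : ℝ) := by
  have hsub := integral_image_eq_integral_abs_deriv_smul MeasurableSet.univ
    (fun t _ ↦ (hasDerivAt_sigmoid t).hasDerivWithinAt) sigmoid_injective.injOn
    (fun u : ℝ ↦ (u : ℂ) ^ z * ((1 - u : ℝ) : ℂ) ^ (-z))
  rw [image_univ, range_sigmoid, Measure.restrict_univ] at hsub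
  rw [betaIntegral, intervalIntegral.integral_of_le zero_le_one, integral_Ioc_eq_integral_Ioo]
  simp only [add_sub_cancel_left, sub_sub_cancel_left]
  push_cast at hsub
  rw [hsub]
  congr 1 with t
  have hσ := sigmoid_pos t
  have hσ' : 0 < 1 - sigmoid t := sub_pos.mpr (sigmoid_lt_one t)
  have hlog : Real.log (sigmoid t) - Real.log (1 - sigmoid t) = t := by
    rw [← sigmoid_neg, ← sigmoid_mul_rexp_neg, Real.log_mul hσ.ne' (Real.exp_pos _).ne',
      Real.log_exp]
    ring
  rw [abs_of_pos (mul_pos hσ hσ'), real_smul, mul_comm]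
  congr 1
  rw [← ofReal_one, ← ofReal_sub, cpow_def_of_ne_zero (by exact_mod_cast hσ.ne'),
    cpow_def_of_ne_zero (by exact_mod_cast hσ'.ne'), ← Complex.exp_add, ← ofReal_log hσ.le,
    ← ofReal_log hσ'.le]
  conv_rhs => rw [← hlog]
  push_cast
  ring_nf

theorem Real.sigmoid_two_mul_mul_one_sub (x : ℝ) :
    sigmoid (2 * x) * (1 - sigmoid (2 * x)) = (4 * cosh x ^ 2)⁻¹ := by
  rw [← sigmoid_neg, sigmoid_def, sigmoid_def, cosh_eq, neg_neg]
  have h2 : exp (2 * x) = exp x ^ 2 := by rw [← exp_nat_mul]; norm_num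
  rw [exp_neg, exp_neg, h2]
  field_simp
  ring

theorem integral_cexp_mul_div_cosh_sq {z : ℂ} (hz : z ≠ 0) (h₀ : -1 < z.re) (h₁ : z.re < 1) :
    ∫ x : ℝ, cexp (2 * z * x) / (cosh x : ℂ) ^ 2 = 2 * π * z / Complex.sin (π * z) := by
  have hscale := Measure.integral_comp_mul_left
    (fun t : ℝ ↦ cexp (z * t) * (sigmoid t * (1 - sigmoid t) : ℝ)) 2
  simp only [← Complex.betaIntegral_one_add_one_sub_eq_integral_sigmoid,
    Complex.betaIntegral_one_add_one_sub hz h₀ h₁, sigmoid_two_mul_mul_one_sub] at hscale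
  calc ∫ x : ℝ, cexp (2 * z * x) / (cosh x : ℂ) ^ 2
      = 4 * ∫ x : ℝ, cexp (z * (2 * x : ℝ)) * ((4 * cosh x ^ 2)⁻¹ : ℝ) := by
        rw [← integral_const_mul]
        congr 1 with x
        push_cast
        field_simp
    _ = 2 * π * z / Complex.sin (π * z) := by
        rw [hscale, abs_of_pos (by norm_num : (0 : ℝ) < 2⁻¹), Complex.real_smul]
        push_cast
        ring

theorem Real.integrable_inv_cosh_sq : Integrable fun x : ℝ ↦ (cosh x ^ 2)⁻¹ := by
  refine integrable_inv_one_add_sq.mono' (by fun_prop) (.of_forall fun x ↦ ?_)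
  have hsinh : x ^ 2 ≤ sinh x ^ 2 := sq_le_sq.mpr <| by
    rw [abs_sinh]; exact self_le_sinh_iff.mpr (abs_nonneg x)
  rw [norm_inv, norm_pow, norm_of_nonneg (cosh_pos x).le, cosh_sq']
  gcongr

theorem integrable_div_cosh_sq {𝕜 : Type*} [RCLike 𝕜] {f : ℝ → 𝕜} (hf : Continuous f) {C : ℝ}
    (hC : ∀ x, ‖f x‖ ≤ C) : Integrable fun x ↦ f x / (cosh x : 𝕜) ^ 2 := by
  have h := (integrable_inv_cosh_sq.ofReal (𝕜 := 𝕜)).bdd_mul hf.aestronglyMeasurable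
    (.of_forall hC)
  simpa [div_eq_mul_inv] using h

theorem integrable_cos_add_mul_div_cosh_sq (c b : ℝ) :
    Integrable fun x : ℝ ↦ cos (c + b * x) / cosh x ^ 2 := by
  simpa using integrable_div_cosh_sq (𝕜 := ℝ) (f := fun x ↦ cos (c + b * x)) (by fun_prop)
    (fun x ↦ (norm_eq_abs _).trans_le (abs_cos_le_one _))

theorem integral_cos_add_mul_div_cosh_sq {b : ℝ} (hb : b ≠ 0) (c : ℝ) :
    ∫ x : ℝ, cos (c + b * x) / cosh x ^ 2 = π * b / sinh (π * b / 2) * cos c := by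
  set F : ℝ → ℂ := fun x ↦ cexp ((c + b * x : ℝ) * Complex.I) / (cosh x : ℂ) ^ 2
  have hF_int : Integrable F :=
    integrable_div_cosh_sq (by fun_prop) (fun x ↦ (Complex.norm_exp_ofReal_mul_I _).le)
  have hF_re (x : ℝ) : (F x).re = cos (c + b * x) / cosh x ^ 2 := by
    simp only [F, ← Complex.ofReal_pow, Complex.div_ofReal_re, Complex.exp_ofReal_mul_I_re]
  have hsin : Complex.sin (π * (b / 2 * Complex.I)) = sinh (π * b / 2) * Complex.I := by
    rw [Complex.ofReal_sinh, ← Complex.sin_mul_I]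
    push_cast
    ring_nf
  have hF_integral : ∫ x, F x = cexp (c * Complex.I) * (π * b / sinh (π * b / 2) : ℝ) := by
    have hz : (b / 2 * Complex.I : ℂ) ≠ 0 := by simp [hb]
    have hF_eq (x : ℝ) : F x = cexp (c * Complex.I) *
        (cexp (2 * (b / 2 * Complex.I) * x) / (cosh x : ℂ) ^ 2) := by
      simp only [F, ← mul_div_assoc, ← Complex.exp_add]
      push_cast
      ring_nf
    simp only [hF_eq, integral_const_mul]
    rw [integral_cexp_mul_div_cosh_sq hz (by simp) (by simp), hsin]
    push_cast
    field_simp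
  have h_re_integral := integral_re hF_int
  simp only [RCLike.re_to_complex, hF_re] at h_re_integral
  rw [h_re_integral, hF_integral, Complex.re_mul_ofReal, Complex.exp_ofReal_mul_I_re, mul_comm]

theorem Real.sin_two_mul_arctan_exp (x : ℝ) : sin (2 * arctan (exp x)) = (cosh x)⁻¹ := by
  have h : 0 < 1 + exp x ^ 2 := by positivity
  rw [sin_two_mul, sin_arctan, cos_arctan, cosh_eq, exp_neg]
  field_simp
  rw [sq_sqrt h.le]
  ring

theorem Real.cos_four_mul_arctan_exp_sub_one (x : ℝ) :
    cos (4 * arctan (exp x)) - 1 = -2 / cosh x ^ 2 := by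
  rw [show 4 * arctan (exp x) = 2 * (2 * arctan (exp x)) by ring, cos_two_mul, cos_sq',
    sin_two_mul_arctan_exp]
  field_simp
  ring

/-- The Melnikov potential of the pendulum–rotor Hamiltonian with two harmonics:
`∫ (cos q₀(σ) - 1)(a₁ cos(φ + Iσ) + a₂ cos(φ - s + (I-1)σ)) dσ
  = -(2πIa₁/sinh(πI/2)) cos φ - (2π(I-1)a₂/sinh(π(I-1)/2)) cos(φ - s)`,
where `q₀(σ) = 4 arctan (exp σ)`. -/
theorem melnikov_potential_two_harmonics (a₁ a₂ φ s I : ℝ) (hI0 : I ≠ 0) (hI1 : I ≠ 1) :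
    MeasureTheory.Integrable (fun σ : ℝ =>
      (Real.cos (4 * Real.arctan (Real.exp σ)) - 1) *
        (a₁ * Real.cos (φ + I * σ) + a₂ * Real.cos (φ - s + (I - 1) * σ))) ∧
    ∫ σ : ℝ, (Real.cos (4 * Real.arctan (Real.exp σ)) - 1) *
        (a₁ * Real.cos (φ + I * σ) + a₂ * Real.cos (φ - s + (I - 1) * σ)) =
      -(2 * π * I * a₁ / Real.sinh (π * I / 2)) * Real.cos φ
        - (2 * π * (I - 1) * a₂ / Real.sinh (π * (I - 1) / 2)) * Real.cos (φ - s) := by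
  have hsplit : (fun σ : ℝ ↦ (cos (4 * arctan (exp σ)) - 1) *
        (a₁ * cos (φ + I * σ) + a₂ * cos (φ - s + (I - 1) * σ))) =
      fun σ ↦ -2 * a₁ * (cos (φ + I * σ) / cosh σ ^ 2) +
        -2 * a₂ * (cos (φ - s + (I - 1) * σ) / cosh σ ^ 2) := by
    ext σ
    rw [cos_four_mul_arctan_exp_sub_one]
    ring
  have h₁ := (integrable_cos_add_mul_div_cosh_sq φ I).const_mul (-2 * a₁)
  have h₂ := (integrable_cos_add_mul_div_cosh_sq (φ - s) (I - 1)).const_mul (-2 * a₂)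
  refine ⟨hsplit ▸ h₁.add h₂, ?_⟩
  rw [hsplit, integral_add h₁ h₂, integral_const_mul, integral_const_mul,
    integral_cos_add_mul_div_cosh_sq hI0, integral_cos_add_mul_div_cosh_sq (sub_ne_zero.mpr hI1)]
  ring
end

section
/- The function α(I) = I²·sinh(π(I−1)/2)/((I−1)²·sinh(πI/2)), extended to I = 0 by the value α(0) = 0 (a removable singularity), is smooth on ℝ∖{1} and its derivative α′(I) is nonzero for every I ≠ 1. -/
open Real

/-- `α(I) = I² sinh(π(I-1)/2) / ((I-1)² sinh(πI/2))`. Note that by Lean's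
division-by-zero convention this function takes the value `0` at `I = 0`, which is
exactly the continuous (removable-singularity) extension `α(0) = 0`. -/
noncomputable def alphaFn (I : ℝ) : ℝ :=
  I ^ 2 * Real.sinh (π * (I - 1) / 2) / ((I - 1) ^ 2 * Real.sinh (π * I / 2))

/-- The slope function of `x ↦ sinh (π x / 2)` at `0`; equals `sinh (π x / 2) / x`
for `x ≠ 0` and `π / 2` at `x = 0`. -/
noncomputable def uAux : ℝ → ℝ := dslope (fun x => Real.sinh (π * x / 2)) 0

lemma analyticAt_sinh_aux (x : ℝ) : AnalyticAt ℝ (fun y : ℝ => Real.sinh (π * y / 2)) x := by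
  have h : (fun y : ℝ => Real.sinh (π * y / 2))
      = fun y : ℝ => (Real.exp (π * y / 2) - Real.exp (-(π * y / 2))) / 2 := by
    funext y; rw [Real.sinh_eq]
  rw [h]
  have hl : AnalyticAt ℝ (fun y : ℝ => π * y / 2) x :=
    (analyticAt_const.mul analyticAt_id).div analyticAt_const (by norm_num)
  exact (hl.rexp.sub hl.neg.rexp).div analyticAt_const (by norm_num)

lemma uAux_spec (x : ℝ) : Real.sinh (π * x / 2) = x * uAux x := by
  rcases eq_or_ne x 0 with rfl | hx
  · simp
  · rw [uAux, dslope_of_ne _ hx, slope_def_field]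
    rw [show π * (0:ℝ) / 2 = 0 by ring, Real.sinh_zero]
    field_simp
    ring

lemma uAux_eq_of_ne {x : ℝ} (hx : x ≠ 0) : uAux x = Real.sinh (π * x / 2) / x := by
  rw [uAux_spec x, mul_div_cancel_left₀ _ hx]

lemma uAux_contDiffAt {n : WithTop ℕ∞} (x : ℝ) : ContDiffAt ℝ n uAux x := by
  rcases eq_or_ne x 0 with rfl | hx
  · obtain ⟨p, hp⟩ := analyticAt_sinh_aux 0
    exact AnalyticAt.contDiffAt ⟨p.fslope, hp.has_fpower_series_dslope_fslope⟩
  · have h : ContDiffAt ℝ n (fun y : ℝ => Real.sinh (π * y / 2) / y) x := by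
      refine ContDiffAt.div ?_ contDiffAt_id hx
      exact (Real.contDiff_sinh.comp
        ((contDiff_const.mul contDiff_id).div_const 2)).contDiffAt
    refine h.congr_of_eventuallyEq ?_
    filter_upwards [eventually_ne_nhds hx] with y hy
    exact uAux_eq_of_ne hy

lemma uAux_zero : uAux 0 = π / 2 := by
  rw [uAux, dslope_same]
  have h1 : HasDerivAt (fun y : ℝ => π * y / 2) (π / 2) 0 := by
    simpa using (((hasDerivAt_id (0 : ℝ)).const_mul π).div_const 2)
  have hd : HasDerivAt (fun y : ℝ => Real.sinh (π * y / 2))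
      (Real.cosh (π * 0 / 2) * (π / 2)) 0 := (Real.hasDerivAt_sinh _).comp 0 h1
  rw [hd.deriv]
  norm_num

lemma uAux_pos (x : ℝ) : 0 < uAux x := by
  have hπ := Real.pi_pos
  rcases lt_trichotomy x 0 with hx | rfl | hx
  · rw [uAux_eq_of_ne hx.ne]
    apply div_pos_of_neg_of_neg _ hx
    exact Real.sinh_neg_iff.mpr (by nlinarith)
  · rw [uAux_zero]; positivity
  · rw [uAux_eq_of_ne hx.ne']
    apply div_pos _ hx
    exact Real.sinh_pos_iff.mpr (by positivity)

lemma alphaFn_aux_eq (I : ℝ) :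
    I ^ 2 * Real.sinh (π * (I - 1) / 2) / ((I - 1) ^ 2 * Real.sinh (π * I / 2))
      = I * Real.sinh (π * (I - 1) / 2) / ((I - 1) ^ 2 * uAux I) := by
  rcases eq_or_ne I 0 with rfl | h0
  · norm_num
  rcases eq_or_ne I 1 with rfl | h1
  · norm_num
  · have hu := (uAux_pos I).ne'
    have h1' : I - 1 ≠ 0 := sub_ne_zero.mpr h1
    rw [uAux_spec I]
    field_simp

lemma exp_pi_div_two_lt : Real.exp (π / 2) < 4.96 := by
  have h08 : Real.exp 0.8 ≤ 2.2257 := by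
    have h := Real.exp_bound' (by norm_num : (0:ℝ) ≤ 0.8) (by norm_num)
      (n := 5) (by norm_num)
    norm_num [Finset.sum_range_succ, Nat.factorial] at h
    linarith
  have hpi : π / 2 < 1.6 := by nlinarith [Real.pi_lt_d2]
  have h2 : Real.exp (π / 2) < Real.exp (0.8 + 0.8) :=
    Real.exp_lt_exp.mpr (by norm_num at hpi ⊢; linarith)
  rw [Real.exp_add] at h2
  nlinarith [Real.exp_pos 0.8]

lemma sinh_pi_div_two_lt : Real.sinh (π / 2) < π := by
  have h1 := exp_pi_div_two_lt
  have h2 : (0:ℝ) < Real.exp (-(π / 2)) := Real.exp_pos _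
  have h3 : π > 3.14 := Real.pi_gt_d2
  rw [Real.sinh_eq]
  norm_num at h1 ⊢
  nlinarith

/-- The key nonvanishing combination in the numerator of `α'`. -/
lemma keyW {I : ℝ} (h0 : I ≠ 0) (h1 : I ≠ 1) :
    π / 2 * I * (I - 1) * Real.sinh (π / 2)
      - 2 * Real.sinh (π * I / 2) * Real.sinh (π * (I - 1) / 2) ≠ 0 := by
  have hπ := Real.pi_pos
  have hC := sinh_pi_div_two_lt
  have hCpos : 0 < Real.sinh (π / 2) := Real.sinh_pos_iff.mpr (by positivity)
  have sinh_lt_self : ∀ x : ℝ, x < 0 → Real.sinh x < x := by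
    intro x hx
    have h := Real.self_lt_sinh_iff.mpr (show 0 < -x by linarith)
    rw [Real.sinh_neg] at h
    linarith
  rcases lt_trichotomy I 0 with hI | hI | hI
  · -- both arguments negative
    have ha : Real.sinh (π * I / 2) < π * I / 2 := sinh_lt_self _ (by nlinarith)
    have hb : Real.sinh (π * (I - 1) / 2) < π * (I - 1) / 2 :=
      sinh_lt_self _ (by nlinarith)
    have ha0 : π * I / 2 < 0 := by nlinarith
    have hb0 : π * (I - 1) / 2 < 0 := by nlinarith
    have hAB : (π * I / 2) * (π * (I - 1) / 2)
        < Real.sinh (π * I / 2) * Real.sinh (π * (I - 1) / 2) := by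
      nlinarith [mul_pos (show (0:ℝ) < π * I / 2 - Real.sinh (π * I / 2) by linarith)
        (show (0:ℝ) < π * (I - 1) / 2 - Real.sinh (π * (I - 1) / 2) by linarith)]
    intro heq
    nlinarith [mul_pos (mul_pos hπ (show (0:ℝ) < -I by linarith))
      (show (0:ℝ) < 1 - I by linarith), mul_pos (show (0:ℝ) < I * (I - 1) by nlinarith)
      (show (0:ℝ) < π - Real.sinh (π / 2) by linarith)]
  · exact absurd hI h0
  · rcases lt_trichotomy I 1 with hI1 | hI1 | hI1
    · -- 0 < I < 1
      have ha : π * I / 2 < Real.sinh (π * I / 2) :=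
        Real.self_lt_sinh_iff.mpr (by positivity)
      have hb : Real.sinh (π * (I - 1) / 2) < π * (I - 1) / 2 :=
        sinh_lt_self _ (by nlinarith)
      have ha0 : 0 < π * I / 2 := by positivity
      have hb0 : π * (I - 1) / 2 < 0 := by nlinarith
      have hAB : Real.sinh (π * I / 2) * Real.sinh (π * (I - 1) / 2)
          < (π * I / 2) * (π * (I - 1) / 2) := by
        nlinarith [mul_pos (show (0:ℝ) < Real.sinh (π * I / 2) - π * I / 2 by linarith)
          (show (0:ℝ) < π * (I - 1) / 2 - Real.sinh (π * (I - 1) / 2) by linarith)]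
      intro heq
      nlinarith [mul_pos (show (0:ℝ) < I * (1 - I) by nlinarith)
        (show (0:ℝ) < π - Real.sinh (π / 2) by linarith), hπ]
    · exact absurd hI1 h1
    · -- I > 1 : both arguments positive
      have ha : π * I / 2 < Real.sinh (π * I / 2) :=
        Real.self_lt_sinh_iff.mpr (by positivity)
      have hb : π * (I - 1) / 2 < Real.sinh (π * (I - 1) / 2) :=
        Real.self_lt_sinh_iff.mpr (by nlinarith)
      have ha0 : 0 < π * I / 2 := by positivity
      have hb0 : 0 < π * (I - 1) / 2 := by nlinarith
      have hAB : (π * I / 2) * (π * (I - 1) / 2)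
          < Real.sinh (π * I / 2) * Real.sinh (π * (I - 1) / 2) := by
        nlinarith [mul_pos (show (0:ℝ) < Real.sinh (π * I / 2) - π * I / 2 by linarith)
          (show (0:ℝ) < Real.sinh (π * (I - 1) / 2) - π * (I - 1) / 2 by linarith)]
      intro heq
      nlinarith [mul_pos (show (0:ℝ) < I * (I - 1) by nlinarith)
        (show (0:ℝ) < π - Real.sinh (π / 2) by linarith), hπ]

lemma alphaFn_repr : alphaFn = fun I : ℝ =>
    I * Real.sinh (π * (I - 1) / 2) / ((I - 1) ^ 2 * uAux I) :=
  funext fun I => alphaFn_aux_eq I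

lemma hasDerivAt_num (I : ℝ) :
    HasDerivAt (fun x : ℝ => x ^ 2 * Real.sinh (π * (x - 1) / 2))
      (2 * I * Real.sinh (π * (I - 1) / 2)
        + I ^ 2 * (Real.cosh (π * (I - 1) / 2) * (π / 2))) I := by
  have hin : HasDerivAt (fun x : ℝ => π * (x - 1) / 2) (π / 2) I := by
    simpa using ((((hasDerivAt_id I).sub_const 1).const_mul π).div_const 2)
  have hs : HasDerivAt (fun x : ℝ => Real.sinh (π * (x - 1) / 2))
      (Real.cosh (π * (I - 1) / 2) * (π / 2)) I := (Real.hasDerivAt_sinh _).comp I hin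
  have hp : HasDerivAt (fun x : ℝ => x ^ 2) (2 * I) I := by
    simpa using hasDerivAt_pow 2 I
  exact hp.mul hs

lemma hasDerivAt_den (I : ℝ) :
    HasDerivAt (fun x : ℝ => (x - 1) ^ 2 * Real.sinh (π * x / 2))
      (2 * (I - 1) * Real.sinh (π * I / 2)
        + (I - 1) ^ 2 * (Real.cosh (π * I / 2) * (π / 2))) I := by
  have hin : HasDerivAt (fun x : ℝ => π * x / 2) (π / 2) I := by
    simpa using (((hasDerivAt_id I).const_mul π).div_const 2)
  have hs : HasDerivAt (fun x : ℝ => Real.sinh (π * x / 2))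
      (Real.cosh (π * I / 2) * (π / 2)) I := (Real.hasDerivAt_sinh _).comp I hin
  have hp : HasDerivAt (fun x : ℝ => (x - 1) ^ 2) (2 * (I - 1)) I := by
    have := (hasDerivAt_pow 2 (I - 1)).comp I ((hasDerivAt_id I).sub_const 1)
    simpa [Function.comp_def] using this
  exact hp.mul hs

lemma deriv_ne_of_ne {I : ℝ} (h0 : I ≠ 0) (h1 : I ≠ 1) : deriv alphaFn I ≠ 0 := by
  have hsI : Real.sinh (π * I / 2) ≠ 0 := by
    exact Real.sinh_ne_zero.mpr
      (div_ne_zero (mul_ne_zero Real.pi_ne_zero h0) two_ne_zero)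
  have hD : ((I - 1) ^ 2 * Real.sinh (π * I / 2)) ≠ 0 :=
    mul_ne_zero (pow_ne_zero 2 (sub_ne_zero.mpr h1)) hsI
  have hq := (hasDerivAt_num I).fun_div (hasDerivAt_den I) hD
  have hfn : alphaFn = fun x : ℝ =>
      (x ^ 2 * Real.sinh (π * (x - 1) / 2)) / ((x - 1) ^ 2 * Real.sinh (π * x / 2)) := rfl
  rw [hfn, hq.deriv]
  apply div_ne_zero _ (pow_ne_zero 2 hD)
  have hs := Real.sinh_sub (π * I / 2) (π * (I - 1) / 2)
  rw [show π * I / 2 - π * (I - 1) / 2 = π / 2 by ring] at hs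
  have hident :
      (2 * I * Real.sinh (π * (I - 1) / 2)
          + I ^ 2 * (Real.cosh (π * (I - 1) / 2) * (π / 2)))
          * ((I - 1) ^ 2 * Real.sinh (π * I / 2))
        - (I ^ 2 * Real.sinh (π * (I - 1) / 2))
          * (2 * (I - 1) * Real.sinh (π * I / 2)
            + (I - 1) ^ 2 * (Real.cosh (π * I / 2) * (π / 2)))
      = I * (I - 1) * (π / 2 * I * (I - 1) * Real.sinh (π / 2)
          - 2 * Real.sinh (π * I / 2) * Real.sinh (π * (I - 1) / 2)) := by
    linear_combination (-(π / 2) * I ^ 2 * (I - 1) ^ 2) * hs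
  rw [hident]
  exact mul_ne_zero (mul_ne_zero h0 (sub_ne_zero.mpr h1)) (keyW h0 h1)

/-- `α`, extended to `I = 0` by `α(0) = 0`, is smooth on `ℝ \ {1}` and its derivative
never vanishes there. -/
theorem alphaFn_smooth_deriv_ne_zero :
    ContDiffOn ℝ (⊤ : ℕ∞) alphaFn {(1 : ℝ)}ᶜ ∧
    ∀ I : ℝ, I ≠ 1 → deriv alphaFn I ≠ 0 := by
  constructor
  · intro x hx
    have hx1 : x ≠ 1 := hx
    apply ContDiffAt.contDiffWithinAt
    rw [alphaFn_repr]
    refine ContDiffAt.div ?_ ?_ ?_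
    · exact contDiffAt_id.mul (Real.contDiff_sinh.comp
        ((contDiff_const.mul (contDiff_id.sub contDiff_const)).div_const 2)).contDiffAt
    · exact ((contDiffAt_id.sub contDiffAt_const).pow 2).mul (uAux_contDiffAt x)
    · exact mul_ne_zero (pow_ne_zero 2 (sub_ne_zero.mpr hx1)) (uAux_pos x).ne'
  · intro I hI
    rcases eq_or_ne I 0 with rfl | h0
    · -- derivative at the removable singularity
      have hu : HasDerivAt uAux (deriv uAux 0) 0 :=
        ((uAux_contDiffAt (n := 1) 0).differentiableAt one_ne_zero).hasDerivAt
      have hin : HasDerivAt (fun x : ℝ => π * (x - 1) / 2) (π / 2) (0:ℝ) := by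
        simpa using ((((hasDerivAt_id (0:ℝ)).sub_const 1).const_mul π).div_const 2)
      have hs : HasDerivAt (fun x : ℝ => Real.sinh (π * (x - 1) / 2))
          (Real.cosh (π * ((0:ℝ) - 1) / 2) * (π / 2)) 0 :=
        (Real.hasDerivAt_sinh _).comp 0 hin
      have hnum : HasDerivAt (fun x : ℝ => x * Real.sinh (π * (x - 1) / 2))
          (1 * Real.sinh (π * ((0:ℝ) - 1) / 2)
            + 0 * (Real.cosh (π * ((0:ℝ) - 1) / 2) * (π / 2))) 0 :=
        (hasDerivAt_id 0).mul hs
      have hp : HasDerivAt (fun x : ℝ => (x - 1) ^ 2) (2 * ((0:ℝ) - 1)) 0 := by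
        have := (hasDerivAt_pow 2 ((0:ℝ) - 1)).comp 0 ((hasDerivAt_id (0:ℝ)).sub_const 1)
        simpa [Function.comp_def] using this
      have hden : HasDerivAt (fun x : ℝ => (x - 1) ^ 2 * uAux x)
          (2 * ((0:ℝ) - 1) * uAux 0 + ((0:ℝ) - 1) ^ 2 * deriv uAux 0) 0 := hp.mul hu
      have hden0 : (((0:ℝ) - 1) ^ 2 * uAux 0) ≠ 0 := by
        have := (uAux_pos 0).ne'
        norm_num [this]
      have hq := hnum.fun_div hden hden0
      rw [alphaFn_repr, hq.deriv]
      apply div_ne_zero _ (pow_ne_zero 2 hden0)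
      have hsne : Real.sinh (π * ((0:ℝ) - 1) / 2) ≠ 0 := by
        rw [Real.sinh_ne_zero]
        have := Real.pi_ne_zero
        norm_num [this]
      have hupos := (uAux_pos 0).ne'
      norm_num
      exact (uAux_pos 0).ne'
    · exact deriv_ne_of_ne h0 hI
end

section
/- Let α(I) = I²·sinh(π(I−1)/2)/((I−1)²·sinh(πI/2)) (with α(0) = 0 by continuous extension) and let μ ≠ 0 be a real number. Then there exists a unique I_c ∈ (0,1) such that |α(I_c)| = 1/|μ|; moreover |α(I)| < 1/|μ| for all I ∈ (0, I_c) and |α(I)| > 1/|μ| for all I ∈ (I_c, 1). -/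
open Real

/-!
On `(0, 1)` one has `|α(I)| = h(I) / h(1 - I)` with `h(x) = x² / sinh(πx/2)`. The derivative of
`h` has the sign of `2 sinh u - u cosh u` at `u = πx/2`, which is positive for `0 < u < 8/5` since
`exp (2u) ≥ 1 + 2u + 2u²`; so `h`, and with it `|α|`, is strictly increasing on `(0, 1)`.
Since `h(x) ≤ 2x/π`, `|α|` tends to `0` at `0`, and the symmetry `|α|(1 - I) = |α|(I)⁻¹`
makes it unbounded at `1`; being continuous, it takes every positive value exactly once.
-/

open Set Filter Topology

theorem StrictMonoOn.exists_unique_crossing_Ioo {α β : Type*} [LinearOrder α] [Preorder β]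
    {f : α → β} {a b : α} {c : β} (hf : StrictMonoOn f (Ioo a b)) (hc : c ∈ f '' Ioo a b) :
    ∃ x, x ∈ Ioo a b ∧ f x = c ∧ (∀ y ∈ Ioo a b, f y = c → y = x) ∧
      (∀ y ∈ Ioo a x, f y < c) ∧ (∀ y ∈ Ioo x b, c < f y) := by
  obtain ⟨x, hx, rfl⟩ := hc
  refine ⟨x, hx, rfl, fun y hy hyx => hf.injOn hy hx hyx, fun y hy => ?_, fun y hy => ?_⟩
  · exact hf ⟨hy.1, hy.2.trans hx.2⟩ hx hy.2
  · exact hf hx ⟨hx.1.trans hy.1, hy.2⟩ hy.1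

theorem two_add_lt_two_sub_mul_exp_two_mul {u : ℝ} (hu₀ : 0 < u) (hu₁ : u < 8 / 5) :
    2 + u < (2 - u) * exp (2 * u) := by
  have := quadratic_le_exp_of_nonneg (by positivity : 0 ≤ 2 * u)
  nlinarith

theorem mul_cosh_lt_two_mul_sinh {u : ℝ} (hu₀ : 0 < u) (hu₁ : u < 8 / 5) :
    u * cosh u < 2 * sinh u := by
  have key := two_add_lt_two_sub_mul_exp_two_mul hu₀ hu₁
  rw [two_mul, exp_add] at key
  rw [cosh_eq, sinh_eq, exp_neg]
  field_simp
  nlinarith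

noncomputable def sqDivSinh (x : ℝ) : ℝ := x ^ 2 / sinh (π * x / 2)

theorem sqDivSinh_pos {x : ℝ} (hx : 0 < x) : 0 < sqDivSinh x := by
  unfold sqDivSinh; positivity

theorem sqDivSinh_le {x : ℝ} (hx : 0 < x) : sqDivSinh x ≤ 2 * x / π := by
  have hs : π * x / 2 < sinh (π * x / 2) := self_lt_sinh_iff.2 (by positivity)
  calc sqDivSinh x ≤ x ^ 2 / (π * x / 2) :=
        div_le_div_of_nonneg_left (by positivity) (by positivity) hs.le
    _ = 2 * x / π := by field_simp

theorem continuousOn_sqDivSinh : ContinuousOn sqDivSinh {0}ᶜ := fun x hx =>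
  have hx : x ≠ 0 := hx
  (ContinuousAt.div (by fun_prop) (by fun_prop) (by positivity)).continuousWithinAt

theorem tendsto_sqDivSinh_nhdsGT_zero : Tendsto sqDivSinh (𝓝[>] 0) (𝓝 0) := by
  have hlin : Tendsto (fun x : ℝ => 2 * x / π) (𝓝[>] 0) (𝓝 0) := by
    simpa using ((continuous_const.mul continuous_id).div_const π).tendsto' 0 0 (by simp)
      |>.mono_left nhdsWithin_le_nhds
  refine tendsto_of_tendsto_of_tendsto_of_le_of_le' tendsto_const_nhds hlin ?_ ?_ <;>
    filter_upwards [self_mem_nhdsWithin] with x hx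
  exacts [(sqDivSinh_pos hx).le, sqDivSinh_le hx]

theorem hasDerivAt_sqDivSinh {x : ℝ} (hx : x ≠ 0) :
    HasDerivAt sqDivSinh
      ((2 * x * sinh (π * x / 2) - x ^ 2 * (cosh (π * x / 2) * (π / 2))) /
        sinh (π * x / 2) ^ 2) x := by
  have hlin : HasDerivAt (fun y : ℝ => π * y / 2) (π / 2) x := by
    simpa using ((hasDerivAt_id x).const_mul π).div_const 2
  have hnum : HasDerivAt (fun y : ℝ => y ^ 2) (2 * x) x := by simpa using hasDerivAt_pow 2 x
  have hden : HasDerivAt (fun y => sinh (π * y / 2)) (cosh (π * x / 2) * (π / 2)) x :=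
    (hasDerivAt_sinh _).comp x hlin
  exact hnum.div hden (by positivity)

theorem strictMonoOn_sqDivSinh : StrictMonoOn sqDivSinh (Ioo 0 1) := by
  refine strictMonoOn_of_deriv_pos (convex_Ioo 0 1)
    (continuousOn_sqDivSinh.mono fun x hx => hx.1.ne') fun x hx => ?_
  rw [interior_Ioo] at hx
  obtain ⟨hx₀, hx₁⟩ := hx
  have hu : π * x / 2 < 8 / 5 := by nlinarith [pi_lt_d2]
  have key := mul_cosh_lt_two_mul_sinh (by positivity) hu
  have hnum : 2 * x * sinh (π * x / 2) - x ^ 2 * (cosh (π * x / 2) * (π / 2)) =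
      x * (2 * sinh (π * x / 2) - π * x / 2 * cosh (π * x / 2)) := by ring
  rw [(hasDerivAt_sqDivSinh hx₀.ne').deriv, hnum]
  have : 0 < 2 * sinh (π * x / 2) - π * x / 2 * cosh (π * x / 2) := by linarith
  positivity

noncomputable def sqDivSinhRatio (I : ℝ) : ℝ := sqDivSinh I / sqDivSinh (1 - I)

theorem sqDivSinhRatio_one_sub (I : ℝ) : sqDivSinhRatio (1 - I) = (sqDivSinhRatio I)⁻¹ := by
  rw [sqDivSinhRatio, sqDivSinhRatio, sub_sub_cancel, inv_div]

theorem sqDivSinhRatio_pos {I : ℝ} (hI : I ∈ Ioo 0 1) : 0 < sqDivSinhRatio I :=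
  div_pos (sqDivSinh_pos hI.1) (sqDivSinh_pos (sub_pos.2 hI.2))

theorem strictMonoOn_sqDivSinhRatio : StrictMonoOn sqDivSinhRatio (Ioo 0 1) := by
  intro I hI J hJ hIJ
  have hmem : ∀ {K}, K ∈ Ioo (0 : ℝ) 1 → 1 - K ∈ Ioo (0 : ℝ) 1 := fun hK =>
    ⟨sub_pos.2 hK.2, sub_lt_self _ hK.1⟩
  exact div_lt_div₀ (strictMonoOn_sqDivSinh hI hJ hIJ)
    (strictMonoOn_sqDivSinh (hmem hJ) (hmem hI) (by linarith)).le
    (sqDivSinh_pos hJ.1).le (sqDivSinh_pos (hmem hJ).1)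

theorem continuousOn_sqDivSinhRatio : ContinuousOn sqDivSinhRatio (Ioo 0 1) :=
  (continuousOn_sqDivSinh.mono fun _ hI => hI.1.ne').div
    (continuousOn_sqDivSinh.comp (continuousOn_const.sub continuousOn_id)
      fun _ hI => (sub_pos.2 hI.2).ne')
    fun _ hI => (sqDivSinh_pos (sub_pos.2 hI.2)).ne'

theorem tendsto_sqDivSinhRatio_nhdsGT_zero : Tendsto sqDivSinhRatio (𝓝[>] 0) (𝓝 0) := by
  have hone : ContinuousAt sqDivSinh 1 :=
    continuousOn_sqDivSinh.continuousAt (isOpen_compl_singleton.mem_nhds one_ne_zero)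
  have hden : Tendsto (fun I => sqDivSinh (1 - I)) (𝓝[>] 0) (𝓝 (sqDivSinh 1)) :=
    hone.tendsto.comp <|
      ((continuous_const.sub continuous_id).tendsto' 0 1 (sub_zero 1)).mono_left
        nhdsWithin_le_nhds
  have := tendsto_sqDivSinh_nhdsGT_zero.div hden (sqDivSinh_pos one_pos).ne'
  rwa [zero_div] at this

theorem surjOn_sqDivSinhRatio : SurjOn sqDivSinhRatio (Ioo 0 1) (Ioi 0) := by
  intro c (hc : 0 < c)
  have hsmall : ∀ ε > 0, ∃ I ∈ Ioo (0 : ℝ) 1, sqDivSinhRatio I < ε := fun ε hε =>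
    ((tendsto_sqDivSinhRatio_nhdsGT_zero.eventually (gt_mem_nhds hε)).and
      (Ioo_mem_nhdsGT one_pos)).exists.imp fun I h => ⟨h.2, h.1⟩
  obtain ⟨a, ha, hac⟩ := hsmall c hc
  obtain ⟨b, hb, hbc⟩ := hsmall c⁻¹ (inv_pos.2 hc)
  have hb' : 1 - b ∈ Ioo (0 : ℝ) 1 := ⟨sub_pos.2 hb.2, sub_lt_self _ hb.1⟩
  have hcb : c < sqDivSinhRatio (1 - b) := by
    rw [sqDivSinhRatio_one_sub]
    exact (lt_inv_comm₀ (sqDivSinhRatio_pos hb) hc).1 hbc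
  have hsub : uIcc a (1 - b) ⊆ Ioo 0 1 := ordConnected_Ioo.uIcc_subset ha hb'
  exact image_mono hsub (intermediate_value_uIcc (continuousOn_sqDivSinhRatio.mono hsub)
    (Icc_subset_uIcc ⟨hac.le, hcb.le⟩))

theorem abs_alphaFn_eq_sqDivSinhRatio {I : ℝ} (hI : I ∈ Ioo 0 1) :
    |alphaFn I| = sqDivSinhRatio I := by
  have hneg : alphaFn I = -sqDivSinhRatio I := by
    have : π * (I - 1) / 2 = -(π * (1 - I) / 2) := by ring
    rw [alphaFn, sqDivSinhRatio, sqDivSinh, sqDivSinh, this, sinh_neg, ← sq_abs (I - 1),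
      abs_sub_comm, sq_abs]
    field_simp
  rw [hneg, abs_neg, abs_of_pos (sqDivSinhRatio_pos hI)]

/-- Bifurcation value in `(0,1)`: for any `μ ≠ 0` there is a unique `I_c ∈ (0,1)`
with `|α(I_c)| = 1/|μ|`; `|α| < 1/|μ|` on `(0, I_c)` and `|α| > 1/|μ|` on `(I_c, 1)`. -/
theorem alphaFn_bifurcation_Ioo (μ : ℝ) (hμ : μ ≠ 0) :
    ∃ Ic : ℝ, Ic ∈ Set.Ioo (0 : ℝ) 1 ∧ |alphaFn Ic| = 1 / |μ| ∧
      (∀ I ∈ Set.Ioo (0 : ℝ) 1, |alphaFn I| = 1 / |μ| → I = Ic) ∧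
      (∀ I ∈ Set.Ioo (0 : ℝ) Ic, |alphaFn I| < 1 / |μ|) ∧
      (∀ I ∈ Set.Ioo Ic 1, 1 / |μ| < |alphaFn I|) := by
  have habs : EqOn sqDivSinhRatio (fun I => |alphaFn I|) (Ioo 0 1) := fun _ hI =>
    (abs_alphaFn_eq_sqDivSinhRatio hI).symm
  have hmono : StrictMonoOn (fun I => |alphaFn I|) (Ioo 0 1) := fun I hI J hJ hIJ => by
    simpa only [← habs hI, ← habs hJ] using strictMonoOn_sqDivSinhRatio hI hJ hIJ
  have hlevel : 1 / |μ| ∈ (fun I => |alphaFn I|) '' Ioo 0 1 :=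
    surjOn_sqDivSinhRatio.congr habs (one_div_pos.2 (abs_pos.2 hμ))
  exact hmono.exists_unique_crossing_Ioo hlevel
end

section
/- Let α(I) = I²·sinh(π(I−1)/2)/((I−1)²·sinh(πI/2)) and let μ ≠ 0. If 1/|μ| < e^{π/2}, then there exists a unique I_l ∈ (−∞,0) with α(I_l) = 1/|μ|, and α(I) > 1/|μ| for all I ∈ (−∞, I_l) while α(I) < 1/|μ| for all I ∈ (I_l, 0). If instead 1/|μ| ≥ e^{π/2}, then α(I) < 1/|μ| for all I < 0. -/
open Real

/-!
`alphaFn` is a strictly decreasing continuous map of `(-∞, 0)` onto `(0, e^{π/2})`.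

Up to the positive factor `I (I - 1)`, the numerator of `α'` is
`(π/2) I (I - 1) sinh(π/2) - 2 sinh(π(I-1)/2) sinh(πI/2)`; with `u = -πI/2` and `c = π/2` its
negativity reads `u (u + c) sinh c < 2c sinh u sinh (u + c)`, which follows from `u < sinh u` and
the addition formula for `sinh (u + c)`.
At `-∞`, `α(I) = (I/(I-1))² · sinh(x - π/2) / sinh x` with `x = πI/2`, and the last ratio
tends to `e^{π/2}`; at `0⁻`, `sinh(πI/2) ≤ πI/2` makes `α(I) = O(|I|)`.
-/

open Filter Topology Set

theorem StrictAntiOn.lt_of_tendsto_atBot {X Y : Type*} [LinearOrder X] [NoMinOrder X]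
    [LinearOrder Y] [TopologicalSpace Y] [OrderClosedTopology Y] {f : X → Y} {b : X} {L : Y}
    (hf : StrictAntiOn f (Iio b)) (hL : Tendsto f atBot (𝓝 L)) {x : X} (hx : x < b) :
    f x < L := by
  have : Nonempty X := ⟨b⟩
  obtain ⟨y, hy⟩ := exists_lt x
  refine (hf (hy.trans hx) hx hy).trans_le (ge_of_tendsto hL ?_)
  filter_upwards [eventually_lt_atBot y] with z hz
  exact (hf (hz.trans (hy.trans hx)) (hy.trans hx) hz).le

theorem StrictAntiOn.lt_of_tendsto_nhdsLT {X Y : Type*} [LinearOrder X] [TopologicalSpace X]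
    [OrderTopology X] [DenselyOrdered X] [NoMinOrder X] [LinearOrder Y] [TopologicalSpace Y]
    [OrderClosedTopology Y] {f : X → Y} {b : X} {l : Y} (hf : StrictAntiOn f (Iio b))
    (hl : Tendsto f (𝓝[<] b) (𝓝 l)) {x : X} (hx : x < b) : l < f x := by
  obtain ⟨y, hxy, hyb⟩ := exists_between hx
  refine (le_of_tendsto hl ?_).trans_lt (hf hx hyb hxy)
  filter_upwards [Ioo_mem_nhdsLT hyb] with z hz
  exact (hf hyb hz.2 hz.1).le

theorem StrictAntiOn.image_Iio_eq_Ioo_of_tendsto {X Y : Type*} [ConditionallyCompleteLinearOrder X]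
    [TopologicalSpace X] [OrderTopology X] [DenselyOrdered X] [NoMinOrder X] [LinearOrder Y]
    [TopologicalSpace Y] [OrderClosedTopology Y] {f : X → Y} {b : X} {l L : Y}
    (hf : StrictAntiOn f (Iio b)) (hcont : ContinuousOn f (Iio b)) (hL : Tendsto f atBot (𝓝 L))
    (hl : Tendsto f (𝓝[<] b) (𝓝 l)) : f '' Iio b = Ioo l L := by
  refine Subset.antisymm ?_ ?_
  · rintro _ ⟨x, hx, rfl⟩
    exact ⟨hf.lt_of_tendsto_nhdsLT hl hx, hf.lt_of_tendsto_atBot hL hx⟩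
  · exact isPreconnected_Iio.intermediate_value_Ioo (l₁ := 𝓝[<] b) inf_le_right
      (le_principal_iff.2 (Iio_mem_atBot b)) hcont hl hL

theorem mul_mul_sinh_lt_sinh_mul_sinh_add {u c : ℝ} (hu : 0 < u) (hc : 1 / 2 ≤ c) :
    u * (u + c) * sinh c < 2 * c * (sinh u * sinh (u + c)) := by
  have hsu : u < sinh u := self_lt_sinh_iff.2 hu
  have hsc : 0 < sinh c := sinh_pos_iff.2 (by linarith)
  have hsc' : sinh c ≤ 2 * c * cosh c := by nlinarith [sinh_lt_cosh c, cosh_pos c]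
  have hadd : u * cosh c + sinh c ≤ sinh (u + c) := by
    rw [sinh_add]; nlinarith [one_le_cosh u, cosh_pos c]
  calc u * (u + c) * sinh c ≤ 2 * c * (u * (u * cosh c + sinh c)) := by
        nlinarith [mul_le_mul_of_nonneg_left hsc' (sq_nonneg u), mul_pos hu hsc]
    _ ≤ 2 * c * (u * sinh (u + c)) := by gcongr
    _ < 2 * c * (sinh u * sinh (u + c)) := by
        have : 0 < sinh (u + c) := sinh_pos_iff.2 (by linarith)
        gcongr

theorem pi_div_two_mul_sinh_lt_two_mul_sinh_mul_sinh {I : ℝ} (hI : I < 0) :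
    π / 2 * (I * (I - 1)) * sinh (π / 2) < 2 * sinh (π * (I - 1) / 2) * sinh (π * I / 2) := by
  have key := mul_mul_sinh_lt_sinh_mul_sinh_add (u := -(π * I / 2)) (c := π / 2)
    (by nlinarith [pi_pos]) (by linarith [pi_gt_three])
  rw [show π * (I - 1) / 2 = -(-(π * I / 2) + π / 2) by ring, sinh_neg,
    show π * I / 2 = -(-(π * I / 2)) by ring, sinh_neg, neg_neg]
  nlinarith [pi_pos]

theorem hasDerivAt_alphaFn {I : ℝ} (hI : (I - 1) ^ 2 * sinh (π * I / 2) ≠ 0) :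
    HasDerivAt alphaFn
      (I * (I - 1) * (π / 2 * (I * (I - 1)) * sinh (π / 2)
        - 2 * sinh (π * (I - 1) / 2) * sinh (π * I / 2))
        / ((I - 1) ^ 2 * sinh (π * I / 2)) ^ 2) I := by
  have hN : HasDerivAt (fun I => I ^ 2 * sinh (π * (I - 1) / 2))
      (2 * I * sinh (π * (I - 1) / 2) + I ^ 2 * (cosh (π * (I - 1) / 2) * (π / 2))) I :=
    ((hasDerivAt_pow 2 I).fun_mul
      ((((hasDerivAt_id I).sub_const 1).const_mul π).div_const 2).sinh).congr_deriv (by simp)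
  have hD : HasDerivAt (fun I => (I - 1) ^ 2 * sinh (π * I / 2))
      (2 * (I - 1) * sinh (π * I / 2) + (I - 1) ^ 2 * (cosh (π * I / 2) * (π / 2))) I :=
    ((((hasDerivAt_id I).sub_const 1).fun_pow 2).fun_mul
      (((hasDerivAt_id I).const_mul π).div_const 2).sinh).congr_deriv (by simp)
  refine (hN.fun_div hD hI).congr_deriv ?_
  have : sinh (π / 2) = sinh (π * I / 2) * cosh (π * (I - 1) / 2)
      - cosh (π * I / 2) * sinh (π * (I - 1) / 2) := by
    rw [← sinh_sub]; ring_nf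
  rw [this]
  ring

theorem sq_sub_one_mul_sinh_neg {I : ℝ} (hI : I < 0) : (I - 1) ^ 2 * sinh (π * I / 2) < 0 :=
  mul_neg_of_pos_of_neg (by nlinarith) (sinh_neg_iff.2 (by nlinarith [pi_pos]))

theorem alphaFn_pos {I : ℝ} (hI : I < 0) : 0 < alphaFn I :=
  div_pos_of_neg_of_neg (mul_neg_of_pos_of_neg (sq_pos_of_neg hI)
    (sinh_neg_iff.2 (by nlinarith [pi_pos]))) (sq_sub_one_mul_sinh_neg hI)

theorem continuousOn_alphaFn : ContinuousOn alphaFn (Iio 0) := fun _ hI =>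
  (hasDerivAt_alphaFn (sq_sub_one_mul_sinh_neg hI).ne).continuousAt.continuousWithinAt

theorem strictAntiOn_alphaFn : StrictAntiOn alphaFn (Iio 0) := by
  refine strictAntiOn_of_deriv_neg (convex_Iio 0) continuousOn_alphaFn fun I hI => ?_
  rw [interior_Iio] at hI
  have hden := sq_sub_one_mul_sinh_neg hI
  rw [(hasDerivAt_alphaFn hden.ne).deriv]
  exact div_neg_of_neg_of_pos (mul_neg_of_pos_of_neg (by nlinarith [mem_Iio.1 hI])
    (by linarith [pi_div_two_mul_sinh_lt_two_mul_sinh_mul_sinh hI])) (sq_pos_of_neg hden)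

theorem alphaFn_le_of_neg {I : ℝ} (hI : I < 0) :
    alphaFn I ≤ 2 / π * I * sinh (π * (I - 1) / 2) / (I - 1) ^ 2 := by
  have hden := sq_sub_one_mul_sinh_neg hI
  have hs : 2 / π * sinh (π * I / 2) ≤ I := by
    rw [div_mul_eq_mul_div, div_le_iff₀ pi_pos]
    linarith [sinh_le_self_iff.2 (by nlinarith [pi_pos] : π * I / 2 ≤ 0)]
  have ha : 0 ≤ I * sinh (π * (I - 1) / 2) :=
    mul_nonneg_of_nonpos_of_nonpos hI.le (sinh_nonpos_iff.2 (by nlinarith [pi_pos]))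
  rw [alphaFn, div_le_iff_of_neg hden]
  have : 2 / π * I * sinh (π * (I - 1) / 2) / (I - 1) ^ 2 * ((I - 1) ^ 2 * sinh (π * I / 2))
      = 2 / π * I * sinh (π * (I - 1) / 2) * sinh (π * I / 2) := by
    field_simp [sub_ne_zero.2 (hI.trans one_pos).ne]
  rw [this]
  nlinarith [mul_le_mul_of_nonneg_left hs ha]

theorem tendsto_alphaFn_nhdsLT_zero : Tendsto alphaFn (𝓝[<] 0) (𝓝 0) := by
  have hg : ContinuousAt (fun I : ℝ => 2 / π * I * sinh (π * (I - 1) / 2) / (I - 1) ^ 2) 0 :=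
    ContinuousAt.div (by fun_prop) (by fun_prop) (by norm_num)
  refine squeeze_zero' (eventually_nhdsWithin_of_forall fun I hI => (alphaFn_pos hI).le)
    (eventually_nhdsWithin_of_forall fun I hI => alphaFn_le_of_neg hI) ?_
  simpa using hg.tendsto.mono_left nhdsWithin_le_nhds

theorem sinh_sub_div_sinh (x c : ℝ) :
    sinh (x - c) / sinh x = (exp (2 * x - c) - exp c) / (exp (2 * x) - 1) := by
  rw [← mul_div_mul_left (sinh (x - c)) (sinh x) (by positivity : 2 * exp x ≠ 0),
    sinh_eq, sinh_eq, exp_neg, exp_neg, exp_sub, exp_sub, show 2 * x = x + x by ring, exp_add]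
  field_simp

theorem tendsto_sinh_sub_div_sinh_atBot (c : ℝ) :
    Tendsto (fun x => sinh (x - c) / sinh x) atBot (𝓝 (exp c)) := by
  have h : Tendsto (fun x : ℝ => 2 * x) atBot atBot := tendsto_id.const_mul_atBot two_pos
  have h1 := tendsto_exp_atBot.comp (tendsto_atBot_add_const_right _ (-c) h)
  have h2 := tendsto_exp_atBot.comp h
  simp_rw [sinh_sub_div_sinh]
  convert (h1.sub_const (exp c)).div (h2.sub_const 1) (by norm_num) using 2
  · simp [sub_eq_add_neg]
  · simp

theorem tendsto_alphaFn_atBot : Tendsto alphaFn atBot (𝓝 (exp (π / 2))) := by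
  have h1 : Tendsto (fun I : ℝ => I / (I - 1)) atBot (𝓝 1) := by
    have : Tendsto (fun I : ℝ => 1 + (I - 1)⁻¹) atBot (𝓝 (1 + 0)) := tendsto_const_nhds.add
      (tendsto_inv_atBot_zero.comp (tendsto_atBot_add_const_right _ (-1) tendsto_id))
    rw [add_zero] at this
    refine this.congr' ?_
    filter_upwards [eventually_lt_atBot 1] with I hI
    field_simp [sub_ne_zero.2 hI.ne]
    ring
  have h2 := (tendsto_sinh_sub_div_sinh_atBot (π / 2)).comp
    (tendsto_id.atBot_mul_const (by positivity : 0 < π / 2))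
  convert (h1.pow 2).mul h2 using 2 with I
  · rw [alphaFn, mul_div_mul_comm, div_pow, Function.comp_apply, id]
    ring_nf
  · simp

/-- Bifurcation value on `(-∞, 0)`: if `1/|μ| < e^{π/2}` there is a unique
`I_l < 0` with `α(I_l) = 1/|μ|`, with `α > 1/|μ|` on `(-∞, I_l)` and `α < 1/|μ|`
on `(I_l, 0)`; if `1/|μ| ≥ e^{π/2}` then `α < 1/|μ|` on all of `(-∞, 0)`. -/
theorem alphaFn_bifurcation_neg (μ : ℝ) (hμ : μ ≠ 0) :
    (1 / |μ| < Real.exp (π / 2) →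
      ∃ Il : ℝ, Il < 0 ∧ alphaFn Il = 1 / |μ| ∧
        (∀ I : ℝ, I < 0 → alphaFn I = 1 / |μ| → I = Il) ∧
        (∀ I : ℝ, I < Il → 1 / |μ| < alphaFn I) ∧
        (∀ I ∈ Set.Ioo Il 0, alphaFn I < 1 / |μ|)) ∧
    (Real.exp (π / 2) ≤ 1 / |μ| → ∀ I : ℝ, I < 0 → alphaFn I < 1 / |μ|) := by
  have himage : alphaFn '' Iio 0 = Ioo 0 (exp (π / 2)) :=
    strictAntiOn_alphaFn.image_Iio_eq_Ioo_of_tendsto continuousOn_alphaFn tendsto_alphaFn_atBot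
      tendsto_alphaFn_nhdsLT_zero
  refine ⟨fun h => ?_, fun h I hI => ?_⟩
  · obtain ⟨Il, hIl, hval⟩ : 1 / |μ| ∈ alphaFn '' Iio 0 := himage ▸ ⟨by positivity, h⟩
    refine ⟨Il, hIl, hval,
      fun I hI hI' => strictAntiOn_alphaFn.injOn hI hIl (hI'.trans hval.symm),
      fun I hI => hval ▸ strictAntiOn_alphaFn (hI.trans hIl) hIl hI,
      fun I hI => hval ▸ strictAntiOn_alphaFn hIl hI.2 hI.1⟩
  · exact (himage.subset (mem_image_of_mem alphaFn hI)).2.trans_le h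
end

section
/- Let α(I) = I²·sinh(π(I−1)/2)/((I−1)²·sinh(πI/2)) and let μ ≠ 0. If 1/|μ| > e^{−π/2}, then there exists a unique I_r ∈ (1,+∞) with α(I_r) = 1/|μ|, and α(I) > 1/|μ| for all I ∈ (1, I_r) while α(I) < 1/|μ| for all I ∈ (I_r, +∞). If instead 1/|μ| ≤ e^{−π/2}, then α(I) > 1/|μ| for all I > 1. -/
open Real

/-!
Write `α(I) = exp (h (I - 1) - h I)` with `h x = log (sinh (π x / 2) / x²)`. Since
`h'' x = 2 / x² - (π / 2)² / sinh² (π x / 2) > 0` (because `sinh t > t`), `h'` is increasing, so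
`I ↦ h (I - 1) - h I` has negative derivative and `α` is strictly decreasing on `(1, ∞)`.
Moreover `α ≥ (π / 2) / ((I - 1) sinh (π I / 2)) → ∞` as `I → 1⁺`, and `α → e^{-π/2}` as `I → ∞`
because `sinh (x - c) / sinh x → e^{-c}`. By the intermediate value theorem `α` is a decreasing
bijection of `(1, ∞)` onto `(e^{-π/2}, ∞)`, which gives both cases.
-/

open Filter Set Topology

theorem strictAntiOn_sub_comp_sub_of_hasDerivAt {g g' : ℝ → ℝ} {a c : ℝ} (hc : 0 < c)
    (hg : ∀ x ∈ Ioi a, HasDerivAt g (g' x) x) (hg' : StrictMonoOn g' (Ioi a)) :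
    StrictAntiOn (fun x ↦ g (x - c) - g x) (Ioi (a + c)) := by
  have hderiv : ∀ x ∈ Ioi (a + c), HasDerivAt (fun x ↦ g (x - c) - g x) (g' (x - c) - g' x) x :=
    fun x (hx : a + c < x) ↦ ((hg (x - c) (show a < x - c by linarith)).comp_sub_const x c).sub
      (hg x (show a < x by linarith))
  refine strictAntiOn_of_hasDerivWithinAt_neg (convex_Ioi _)
    (fun x hx ↦ (hderiv x hx).continuousAt.continuousWithinAt)
    (fun x hx ↦ (hderiv x (interior_subset hx)).hasDerivWithinAt) fun x hx ↦ ?_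
  rw [interior_Ioi, mem_Ioi] at hx
  exact sub_neg.2 (hg' (show a < x - c by linarith) (show a < x by linarith) (by linarith))

theorem sinh_eq_exp_mul_one_sub (y : ℝ) : sinh y = exp y * (1 - exp (-(2 * y))) / 2 := by
  have : exp y * exp (-(2 * y)) = exp (-y) := by rw [← exp_add]; ring_nf
  rw [sinh_eq]
  linear_combination this / 2

theorem tendsto_sinh_sub_div_sinh_atTop (c : ℝ) :
    Tendsto (fun x ↦ sinh (x - c) / sinh x) atTop (𝓝 (exp (-c))) := by
  have hsmall : ∀ d, Tendsto (fun x ↦ 1 - exp (-(2 * (x - d)))) atTop (𝓝 1) := fun d ↦ by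
    simpa [sub_eq_add_neg] using tendsto_const_nhds.sub (tendsto_exp_neg_atTop_nhds_zero.comp
      ((tendsto_atTop_add_const_right _ (-d) tendsto_id).const_mul_atTop two_pos))
  have hquot := (hsmall c).div (by simpa using hsmall 0) one_ne_zero
  rw [div_one] at hquot
  rw [← mul_one (exp (-c))]
  refine (hquot.const_mul (exp (-c))).congr fun x ↦ ?_
  simp only [Pi.div_apply, sinh_eq_exp_mul_one_sub, exp_sub, exp_neg]
  field_simp

theorem StrictAntiOn.lt_of_tendsto_atTop {f : ℝ → ℝ} {a L x : ℝ} (hf : StrictAntiOn f (Ioi a))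
    (hL : Tendsto f atTop (𝓝 L)) (hx : a < x) : L < f x := by
  have hx1 : a < x + 1 := by linarith
  have hle : L ≤ f (x + 1) := le_of_tendsto hL <| (eventually_ge_atTop (x + 1)).mono
    fun y hy ↦ hf.antitoneOn hx1 (show a < y by linarith) hy
  exact hle.trans_lt (hf hx hx1 (lt_add_one x))

noncomputable def logSinhDivSq (x : ℝ) : ℝ := log (sinh (π * x / 2)) - 2 * log x

noncomputable def logSinhDivSqDeriv (x : ℝ) : ℝ :=
  π / 2 * (cosh (π * x / 2) / sinh (π * x / 2)) - 2 / x

theorem sinh_pi_mul_div_two_pos {x : ℝ} (hx : 0 < x) : 0 < sinh (π * x / 2) :=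
  sinh_pos_iff.2 (by positivity)

theorem hasDerivAt_pi_mul_div_two (x : ℝ) : HasDerivAt (fun y : ℝ ↦ π * y / 2) (π / 2) x := by
  simpa using ((hasDerivAt_id x).const_mul π).div_const 2

theorem hasDerivAt_logSinhDivSq {x : ℝ} (hx : 0 < x) :
    HasDerivAt logSinhDivSq (logSinhDivSqDeriv x) x := by
  have hsinh := ((hasDerivAt_sinh _).comp x (hasDerivAt_pi_mul_div_two x)).log
    (sinh_pi_mul_div_two_pos hx).ne'
  refine (hsinh.sub ((hasDerivAt_log hx.ne').const_mul 2)).congr_deriv ?_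
  simp only [logSinhDivSqDeriv, Function.comp_apply]
  ring

theorem hasDerivAt_logSinhDivSqDeriv {x : ℝ} (hx : 0 < x) :
    HasDerivAt logSinhDivSqDeriv (2 / x ^ 2 - (π / 2) ^ 2 / sinh (π * x / 2) ^ 2) x := by
  have hs := sinh_pi_mul_div_two_pos hx
  have hcoth := ((hasDerivAt_cosh _).comp x (hasDerivAt_pi_mul_div_two x)).div
    ((hasDerivAt_sinh _).comp x (hasDerivAt_pi_mul_div_two x)) hs.ne'
  refine ((hcoth.const_mul (π / 2)).sub ((hasDerivAt_inv hx.ne').const_mul 2)).congr_deriv ?_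
  simp only [Function.comp_apply]
  field_simp
  linear_combination (-(π ^ 2 * x ^ 2)) * cosh_sq (π * x / 2)

theorem logSinhDivSqDeriv_strictMonoOn : StrictMonoOn logSinhDivSqDeriv (Ioi 0) := by
  refine strictMonoOn_of_hasDerivWithinAt_pos (convex_Ioi 0)
    (fun x hx ↦ (hasDerivAt_logSinhDivSqDeriv hx).continuousAt.continuousWithinAt)
    (fun x hx ↦ (hasDerivAt_logSinhDivSqDeriv (interior_subset hx :)).hasDerivWithinAt)
    fun x hx ↦ ?_
  rw [interior_Ioi, mem_Ioi] at hx
  have hs := sinh_pi_mul_div_two_pos hx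
  have hsq : (π * x / 2) ^ 2 < sinh (π * x / 2) ^ 2 :=
    pow_lt_pow_left₀ (self_lt_sinh_iff.2 (by positivity)) (by positivity) two_ne_zero
  rw [sub_pos, div_lt_div_iff₀ (by positivity) (by positivity)]
  nlinarith

theorem logSinhDivSq_eq_log_div {x : ℝ} (hx : 0 < x) :
    logSinhDivSq x = log (sinh (π * x / 2) / x ^ 2) := by
  rw [logSinhDivSq, log_div (sinh_pi_mul_div_two_pos hx).ne' (by positivity), log_pow,
    Nat.cast_ofNat]

theorem alphaFn_eq_exp {I : ℝ} (hI : 1 < I) :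
    alphaFn I = exp (logSinhDivSq (I - 1) - logSinhDivSq I) := by
  have hI₁ : 0 < I - 1 := sub_pos.2 hI
  have hI₀ : 0 < I := hI₁.trans (sub_lt_self I one_pos)
  rw [logSinhDivSq_eq_log_div hI₁, logSinhDivSq_eq_log_div hI₀, exp_sub,
    exp_log (div_pos (sinh_pi_mul_div_two_pos hI₁) (by positivity)),
    exp_log (div_pos (sinh_pi_mul_div_two_pos hI₀) (by positivity)), alphaFn]
  field_simp

theorem alphaFn_strictAntiOn : StrictAntiOn alphaFn (Ioi 1) := by
  have hψ := strictAntiOn_sub_comp_sub_of_hasDerivAt one_pos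
    (fun x hx ↦ hasDerivAt_logSinhDivSq hx) logSinhDivSqDeriv_strictMonoOn
  rw [zero_add] at hψ
  exact (exp_strictMono.comp_strictAntiOn hψ).congr fun I hI ↦ (alphaFn_eq_exp hI).symm

theorem alphaFn_continuousOn : ContinuousOn alphaFn (Ioi 1) := by
  refine ContinuousOn.div (by fun_prop) (by fun_prop) fun I hI ↦ ?_
  have hI₁ : 0 < I - 1 := sub_pos.2 hI
  exact (mul_pos (pow_pos hI₁ 2) (sinh_pi_mul_div_two_pos (hI₁.trans (sub_lt_self I one_pos)))).ne'

theorem pi_div_two_div_le_alphaFn {I : ℝ} (hI : 1 < I) :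
    π / 2 / ((I - 1) * sinh (π * I / 2)) ≤ alphaFn I := by
  have hI₁ : 0 < I - 1 := sub_pos.2 hI
  have hs := sinh_pi_mul_div_two_pos (hI₁.trans (sub_lt_self I one_pos))
  have hnum : π * (I - 1) / 2 ≤ I ^ 2 * sinh (π * (I - 1) / 2) :=
    (self_le_sinh_iff.2 (by positivity)).trans <| le_mul_of_one_le_left
      (sinh_pi_mul_div_two_pos hI₁).le (one_le_pow₀ hI.le)
  calc π / 2 / ((I - 1) * sinh (π * I / 2))
      = π * (I - 1) / 2 / ((I - 1) ^ 2 * sinh (π * I / 2)) := by field_simp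
    _ ≤ alphaFn I := by rw [alphaFn]; gcongr

theorem tendsto_alphaFn_nhdsGT_one : Tendsto alphaFn (𝓝[>] 1) atTop := by
  have hden : Tendsto (fun I ↦ (I - 1) * sinh (π * I / 2)) (𝓝[>] 1) (𝓝[>] 0) := by
    refine tendsto_nhdsWithin_iff.2 ⟨?_, ?_⟩
    · have h := ((by fun_prop : Continuous fun I : ℝ ↦ (I - 1) * sinh (π * I / 2)).tendsto 1)
      simpa using h.mono_left nhdsWithin_le_nhds
    · filter_upwards [self_mem_nhdsWithin] with I (hI : 1 < I)
      exact mul_pos (sub_pos.2 hI) (sinh_pi_mul_div_two_pos (by linarith))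
  refine tendsto_atTop_mono' _ ?_ (hden.inv_tendsto_nhdsGT_zero.const_mul_atTop (half_pos pi_pos))
  filter_upwards [self_mem_nhdsWithin] with I (hI : 1 < I)
  simpa [div_eq_mul_inv] using pi_div_two_div_le_alphaFn hI

theorem alphaFn_eq_sq_mul_sinh_div_sinh (I : ℝ) :
    alphaFn I = (I / (I - 1)) ^ 2 * (sinh (π * I / 2 - π / 2) / sinh (π * I / 2)) := by
  rw [alphaFn, div_pow, div_mul_div_comm, mul_sub, sub_div, mul_one]

theorem tendsto_alphaFn_atTop : Tendsto alphaFn atTop (𝓝 (exp (-(π / 2)))) := by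
  have hratio : Tendsto (fun I : ℝ ↦ I / (I - 1)) atTop (𝓝 1) := by
    have h := (tendsto_const_nhds (x := (1 : ℝ)).sub tendsto_inv_atTop_zero).inv₀ (by norm_num)
    rw [sub_zero, inv_one] at h
    refine h.congr' ((eventually_ne_atTop 0).mono fun I hI ↦ ?_)
    field_simp
  have hsinh := (tendsto_sinh_sub_div_sinh_atTop (π / 2)).comp
    ((tendsto_id.const_mul_atTop pi_pos).atTop_div_const two_pos)
  simpa [funext alphaFn_eq_sq_mul_sinh_div_sinh] using (hratio.pow 2).mul hsinh

theorem Ioi_subset_image_alphaFn : Ioi (exp (-(π / 2))) ⊆ alphaFn '' Ioi 1 :=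
  isPreconnected_Ioi.intermediate_value_Ioi (le_principal_iff.2 (Ioi_mem_atTop 1))
    (le_principal_iff.2 self_mem_nhdsWithin) alphaFn_continuousOn tendsto_alphaFn_atTop
    tendsto_alphaFn_nhdsGT_one

theorem alphaFn_bifurcation_pos_general (μ : ℝ) :
    (Real.exp (-(π / 2)) < 1 / |μ| →
      ∃ Ir : ℝ, 1 < Ir ∧ alphaFn Ir = 1 / |μ| ∧
        (∀ I : ℝ, 1 < I → alphaFn I = 1 / |μ| → I = Ir) ∧
        (∀ I ∈ Set.Ioo 1 Ir, 1 / |μ| < alphaFn I) ∧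
        (∀ I : ℝ, Ir < I → alphaFn I < 1 / |μ|)) ∧
    (1 / |μ| ≤ Real.exp (-(π / 2)) → ∀ I : ℝ, 1 < I → 1 / |μ| < alphaFn I) := by
  refine ⟨fun hμ ↦ ?_, fun hμ I hI ↦
    hμ.trans_lt (alphaFn_strictAntiOn.lt_of_tendsto_atTop tendsto_alphaFn_atTop hI)⟩
  obtain ⟨Ir, hIr : 1 < Ir, hαIr⟩ := Ioi_subset_image_alphaFn hμ
  refine ⟨Ir, hIr, hαIr, fun I hI hαI ↦ alphaFn_strictAntiOn.injOn hI hIr (hαI.trans hαIr.symm),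
    fun I hI ↦ hαIr ▸ alphaFn_strictAntiOn hI.1 hIr hI.2, fun I hI ↦ ?_⟩
  exact hαIr ▸ alphaFn_strictAntiOn hIr (hIr.trans hI) hI

/-- Bifurcation value on `(1, +∞)`: if `1/|μ| > e^{-π/2}` there is a unique
`I_r > 1` with `α(I_r) = 1/|μ|`, with `α > 1/|μ|` on `(1, I_r)` and `α < 1/|μ|`
on `(I_r, +∞)`; if `1/|μ| ≤ e^{-π/2}` then `α > 1/|μ|` on all of `(1, +∞)`. -/
theorem alphaFn_bifurcation_pos (μ : ℝ) (hμ : μ ≠ 0) :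
    (Real.exp (-(π / 2)) < 1 / |μ| →
      ∃ Ir : ℝ, 1 < Ir ∧ alphaFn Ir = 1 / |μ| ∧
        (∀ I : ℝ, 1 < I → alphaFn I = 1 / |μ| → I = Ir) ∧
        (∀ I ∈ Set.Ioo 1 Ir, 1 / |μ| < alphaFn I) ∧
        (∀ I : ℝ, Ir < I → alphaFn I < 1 / |μ|)) ∧
    (1 / |μ| ≤ Real.exp (-(π / 2)) → ∀ I : ℝ, 1 < I → 1 / |μ| < alphaFn I) :=
  alphaFn_bifurcation_pos_general μ
end
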